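/- arXiv:2402.15635 — 2 statements merged into one kernel-verified Lean document; each statement's English description precedes it below -/
import Mathlib

section
/- Let X̃ = diag(x̃) and X = diag(x) for vectors x̃, x ∈ ℝⁿ with entries bounded: x_min ≤ xᵢ, x̃ᵢ ≤ x_max with x_min > 0. Let A be an m×n matrix such that AX̃²Aᵀ and AX²Aᵀ are invertible; set Σ̃ = (AX̃²Aᵀ)⁻¹, Σ = (AX²Aᵀ)⁻¹, and ΔΣ = Σ̃ − Σ. Then Tr(Σ⁻¹ ΔΣ Σ⁻¹ ΔΣ) ≥ (x_min⁴ λ_min²(AAᵀ) / (x_max⁸ λ_max⁴(AAᵀ))) · ‖A(X̃² − X²)Aᵀ‖²_HS. -/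
/-
Write `S = A X² Aᵀ`, `T = A X̃² Aᵀ` and `D = T - S`. Since `T⁻¹ - S⁻¹ = -T⁻¹ D S⁻¹`, cyclicity
of the trace turns `Tr(S ΔΣ S ΔΣ)` into `Tr(T⁻¹ D T⁻¹ D)`. In the Loewner order
`T ≤ x_max² A Aᵀ ≤ x_max² λ_max I`, hence `T⁻¹ ≥ c I` with `c = (x_max² λ_max)⁻¹`. For symmetric
`D` and `P ≥ c I ≥ 0`, `Tr(P D P D) ≥ c Tr(D P D) ≥ c² Tr(D²) = c² ‖D‖²_HS`, because the trace of
a product of two positive semidefinite matrices is nonnegative. The stated constant is at most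
`c²` since `x_min² λ_min ≤ x_max² λ_max`.
-/
open Matrix MeasureTheory ProbabilityTheory Real

noncomputable def sNorm {m n : ℕ} (M : Matrix (Fin m) (Fin n) ℝ) : ℝ :=
  ‖LinearMap.toContinuousLinearMap (Matrix.toEuclideanLin M)‖

noncomputable def sMin {m n : ℕ} (M : Matrix (Fin m) (Fin n) ℝ) : ℝ :=
  sInf {r | ∃ x : EuclideanSpace ℝ (Fin n), ‖x‖ = 1 ∧ r = ‖Matrix.toEuclideanLin M x‖}

noncomputable def lamMax {n : ℕ} (M : Matrix (Fin n) (Fin n) ℝ) : ℝ :=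
  sSup {μ : ℝ | Module.End.HasEigenvalue (Matrix.toEuclideanLin M) μ}

noncomputable def lamMin {n : ℕ} (M : Matrix (Fin n) (Fin n) ℝ) : ℝ :=
  sInf {μ : ℝ | Module.End.HasEigenvalue (Matrix.toEuclideanLin M) μ}

noncomputable def frobSq {m n : ℕ} (M : Matrix (Fin m) (Fin n) ℝ) : ℝ :=
  ∑ i, ∑ j, (M i j)^2

open scoped MatrixOrder

theorem setOf_hasEigenvalue_toEuclideanLin {k : ℕ} (M : Matrix (Fin k) (Fin k) ℝ) :
    {μ : ℝ | Module.End.HasEigenvalue (toEuclideanLin M) μ} = spectrum ℝ M := by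
  ext μ
  exact Module.End.hasEigenvalue_iff_mem_spectrum.trans (by rw [spectrum_toLpLin])

section Eigenvalues

variable {k : ℕ} {M : Matrix (Fin k) (Fin k) ℝ}

theorem lamMax_eq_sSup_spectrum (M : Matrix (Fin k) (Fin k) ℝ) :
    lamMax M = sSup (spectrum ℝ M) := by
  rw [lamMax, setOf_hasEigenvalue_toEuclideanLin]

theorem lamMin_eq_sInf_spectrum (M : Matrix (Fin k) (Fin k) ℝ) :
    lamMin M = sInf (spectrum ℝ M) := by
  rw [lamMin, setOf_hasEigenvalue_toEuclideanLin]

theorem le_lamMax {μ : ℝ} (hμ : μ ∈ spectrum ℝ M) : μ ≤ lamMax M :=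
  lamMax_eq_sSup_spectrum M ▸ le_csSup M.finite_real_spectrum.bddAbove hμ

theorem lamMin_le {μ : ℝ} (hμ : μ ∈ spectrum ℝ M) : lamMin M ≤ μ :=
  lamMin_eq_sInf_spectrum M ▸ csInf_le M.finite_real_spectrum.bddBelow hμ

theorem lamMin_le_lamMax (M : Matrix (Fin k) (Fin k) ℝ) : lamMin M ≤ lamMax M := by
  rcases (spectrum ℝ M).eq_empty_or_nonempty with h | ⟨μ, hμ⟩
  -- an empty spectrum (e.g. `k = 0`) has `sInf ∅ = sSup ∅ = 0`
  · simp [lamMin_eq_sInf_spectrum, lamMax_eq_sSup_spectrum, h]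
  · exact (lamMin_le hμ).trans (le_lamMax hμ)

theorem lamMin_nonneg (hM : M.PosSemidef) : 0 ≤ lamMin M :=
  lamMin_eq_sInf_spectrum M ▸ Real.sInf_nonneg fun _ hx => spectrum_nonneg_of_nonneg hM.nonneg hx

theorem le_lamMax_smul_one (hM : M.IsHermitian) : M ≤ lamMax M • 1 := by
  rw [← Algebra.algebraMap_eq_smul_one]
  exact le_algebraMap_of_spectrum_le (fun _ hx => le_lamMax hx) hM.isSelfAdjoint

end Eigenvalues

theorem frobSq_nonneg {m n : ℕ} (M : Matrix (Fin m) (Fin n) ℝ) : 0 ≤ frobSq M :=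
  Finset.sum_nonneg fun _ _ => Finset.sum_nonneg fun _ _ => sq_nonneg _

theorem frobSq_eq_trace_mul_transpose {m n : ℕ} (M : Matrix (Fin m) (Fin n) ℝ) :
    frobSq M = (M * Mᵀ).trace := by
  simp only [frobSq, trace, diag, mul_apply, transpose_apply, sq]

namespace Matrix

theorem trace_mul_inv_sub_inv_mul_mul_inv_sub_inv {n R : Type*} [Fintype n] [DecidableEq n]
    [CommRing R] {S T : Matrix n n R} (hS : IsUnit S.det) (hT : IsUnit T.det) :
    (S * (T⁻¹ - S⁻¹) * S * (T⁻¹ - S⁻¹)).trace = (T⁻¹ * (T - S) * T⁻¹ * (T - S)).trace := by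
  have hdiff : T⁻¹ - S⁻¹ = T⁻¹ * (S - T) * S⁻¹ := by
    rw [mul_sub, sub_mul, nonsing_inv_mul _ hT, one_mul, mul_assoc, mul_nonsing_inv _ hS, mul_one]
  calc (S * (T⁻¹ - S⁻¹) * S * (T⁻¹ - S⁻¹)).trace
      = (S * (T⁻¹ * (S - T) * T⁻¹ * (S - T)) * S⁻¹).trace := by
        rw [hdiff]; simp only [mul_assoc, nonsing_inv_mul_cancel_left _ _ hS]
    _ = (T⁻¹ * (S - T) * T⁻¹ * (S - T)).trace := by
        rw [trace_mul_comm, nonsing_inv_mul_cancel_left _ _ hS]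
    _ = (T⁻¹ * (T - S) * T⁻¹ * (T - S)).trace := by
        rw [← neg_sub T S]; noncomm_ring

theorem PosSemidef.trace_mul_nonneg {m : Type*} [Fintype m] [DecidableEq m] {R X : Matrix m m ℝ}
    (hR : R.PosSemidef) (hX : X.PosSemidef) : 0 ≤ (R * X).trace := by
  have hsqrt : (CFC.sqrt X)ᴴ = CFC.sqrt X := (CFC.sqrt_nonneg X).isSelfAdjoint
  rw [← CFC.sqrt_mul_sqrt_self X hX.nonneg, ← mul_assoc, trace_mul_cycle]
  simpa only [hsqrt] using (hR.conjTranspose_mul_mul_same (CFC.sqrt X)).trace_nonneg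

theorem smul_trace_le_trace_mul {m : Type*} [Fintype m] [DecidableEq m] {P X : Matrix m m ℝ}
    {c : ℝ} (hP : c • 1 ≤ P) (hX : X.PosSemidef) : c * X.trace ≤ (P * X).trace := by
  have := PosSemidef.trace_mul_nonneg (le_iff.mp hP) hX
  rwa [Matrix.sub_mul, trace_sub, smul_mul, Matrix.one_mul, trace_smul, smul_eq_mul,
    sub_nonneg] at this

theorem posSemidef_mul_diagonal_sq_mul_transpose {m n : Type*} [Fintype m] [Fintype n]
    [DecidableEq n] (A : Matrix m n ℝ) (d : n → ℝ) : (A * diagonal d ^ 2 * Aᵀ).PosSemidef := by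
  rw [diagonal_pow, ← conjTranspose_eq_transpose_of_trivial]
  exact (posSemidef_diagonal_iff.mpr fun i => sq_nonneg (d i)).mul_mul_conjTranspose_same A

theorem mul_diagonal_sq_mul_transpose_le {m n : Type*} [Fintype m] [Fintype n] [DecidableEq n]
    (A : Matrix m n ℝ) {d : n → ℝ} {c : ℝ} (hd : ∀ i, d i ^ 2 ≤ c) :
    A * diagonal d ^ 2 * Aᵀ ≤ c • (A * Aᵀ) := by
  have hgap :
      c • (A * Aᵀ) - A * diagonal d ^ 2 * Aᵀ = A * diagonal (fun i => c - d i ^ 2) * Aᵀ := by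
    rw [diagonal_pow, ← diagonal_sub, ← smul_one_eq_diagonal, Matrix.mul_sub, Matrix.sub_mul,
      Matrix.mul_smul, Matrix.smul_mul, Matrix.mul_one]
    rfl
  rw [le_iff, hgap]
  simpa using
    (posSemidef_diagonal_iff.mpr fun i => sub_nonneg.mpr (hd i)).mul_mul_conjTranspose_same A

theorem inv_smul_one_le_inv {m : Type*} [Fintype m] [DecidableEq m] {T : Matrix m m ℝ}
    (hT : T.PosDef) {b : ℝ} (h : T ≤ b • 1) : b⁻¹ • 1 ≤ T⁻¹ := by
  lift T to (Matrix m m ℝ)ˣ using hT.isUnit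
  have hTinv : (↑T⁻¹ : Matrix m m ℝ).PosDef := by rw [coe_units_inv]; exact hT.inv
  rw [← coe_units_inv, ← Algebra.algebraMap_eq_smul_one,
    algebraMap_le_iff_le_spectrum hTinv.isHermitian.isSelfAdjoint]
  rw [← Algebra.algebraMap_eq_smul_one,
    le_algebraMap_iff_spectrum_le hT.isHermitian.isSelfAdjoint] at h
  intro x hx
  exact inv_le_of_inv_le₀ (hTinv.isStrictlyPositive.spectrum_pos hx)
    (h _ (spectrum.inv₀_mem_iff.mpr hx))

end Matrix

theorem sq_mul_frobSq_le_trace {k : ℕ} {P M : Matrix (Fin k) (Fin k) ℝ} {c : ℝ} (hc : 0 ≤ c)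
    (hP : c • 1 ≤ P) (hM : M.IsHermitian) : c ^ 2 * frobSq M ≤ (P * M * P * M).trace := by
  have hP₀ : P.PosSemidef := by
    simpa using (PosSemidef.one.smul hc).add (le_iff.mp hP)
  have hMM : (M * M).PosSemidef := by
    simpa only [hM.eq] using posSemidef_conjTranspose_mul_self M
  have hMPM : (M * P * M).PosSemidef := by
    simpa only [hM.eq] using hP₀.conjTranspose_mul_mul_same M
  calc c ^ 2 * frobSq M = c * (c * (M * M).trace) := by
        rw [frobSq_eq_trace_mul_transpose, ← conjTranspose_eq_transpose_of_trivial, hM.eq]; ring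
    _ ≤ c * (P * (M * M)).trace := mul_le_mul_of_nonneg_left (smul_trace_le_trace_mul hP hMM) hc
    _ = c * (M * P * M).trace := by rw [← mul_assoc, trace_mul_cycle]
    _ ≤ (P * (M * P * M)).trace := smul_trace_le_trace_mul hP hMPM
    _ = (P * M * P * M).trace := by simp only [mul_assoc]

theorem div_le_inv_sq_of_le {a b l L : ℝ} (ha : 0 ≤ a) (hab : a ≤ b) (hl : 0 ≤ l) (hlL : l ≤ L) :
    a ^ 4 * l ^ 2 / (b ^ 8 * L ^ 4) ≤ (b ^ 2 * L)⁻¹ ^ 2 := by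
  have hden : 0 ≤ b ^ 2 * L := mul_nonneg (sq_nonneg b) (hl.trans hlL)
  have hratio : a ^ 2 * l / (b ^ 2 * L) ≤ 1 :=
    div_le_one_of_le₀ (mul_le_mul (pow_le_pow_left₀ ha hab 2) hlL hl (sq_nonneg b)) hden
  calc a ^ 4 * l ^ 2 / (b ^ 8 * L ^ 4) = (a ^ 2 * l / (b ^ 2 * L)) ^ 2 * (b ^ 2 * L)⁻¹ ^ 2 := by
        ring
    _ ≤ 1 * (b ^ 2 * L)⁻¹ ^ 2 := by
        gcongr
        exact pow_le_one₀ (div_nonneg (by positivity) hden) hratio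
    _ = (b ^ 2 * L)⁻¹ ^ 2 := one_mul _

theorem stmt3_general {m n : ℕ} (A : Matrix (Fin m) (Fin n) ℝ)
    (x xt : Fin n → ℝ) (xmin xmax : ℝ) (hxmin : 0 < xmin)
    (hxt : ∀ i, xt i ∈ Set.Icc xmin xmax)
    (hX : IsUnit (A * (Matrix.diagonal x) ^ 2 * Aᵀ).det)
    (hXt : IsUnit (A * (Matrix.diagonal xt) ^ 2 * Aᵀ).det) :
    Matrix.trace
      (((A * (Matrix.diagonal x) ^ 2 * Aᵀ)⁻¹)⁻¹ *
        ((A * (Matrix.diagonal xt) ^ 2 * Aᵀ)⁻¹ - (A * (Matrix.diagonal x) ^ 2 * Aᵀ)⁻¹) *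
        ((A * (Matrix.diagonal x) ^ 2 * Aᵀ)⁻¹)⁻¹ *
        ((A * (Matrix.diagonal xt) ^ 2 * Aᵀ)⁻¹ - (A * (Matrix.diagonal x) ^ 2 * Aᵀ)⁻¹)) ≥
      (xmin ^ 4 * lamMin (A * Aᵀ) ^ 2 / (xmax ^ 8 * lamMax (A * Aᵀ) ^ 4)) *
        frobSq (A * ((Matrix.diagonal xt) ^ 2 - (Matrix.diagonal x) ^ 2) * Aᵀ) := by
  set S := A * diagonal x ^ 2 * Aᵀ
  set T := A * diagonal xt ^ 2 * Aᵀ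
  set b := xmax ^ 2 * lamMax (A * Aᵀ)
  have hAAt : (A * Aᵀ).PosSemidef := by simpa using posSemidef_self_mul_conjTranspose A
  have hlamMin := lamMin_nonneg hAAt
  have hb : 0 ≤ b := mul_nonneg (sq_nonneg xmax) (hlamMin.trans (lamMin_le_lamMax _))
  have hTb : T ≤ b • 1 := calc
    T ≤ xmax ^ 2 • (A * Aᵀ) := mul_diagonal_sq_mul_transpose_le A fun i =>
        pow_le_pow_left₀ (hxmin.le.trans (hxt i).1) (hxt i).2 2
    _ ≤ xmax ^ 2 • (lamMax (A * Aᵀ) • 1) :=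
        smul_le_smul_of_nonneg_left (le_lamMax_smul_one hAAt.isHermitian) (sq_nonneg xmax)
    _ = b • 1 := smul_smul _ _ _
  have hT : T.PosDef := (posSemidef_mul_diagonal_sq_mul_transpose A xt).posDef_iff_isUnit.mpr
    ((isUnit_iff_isUnit_det T).mpr hXt)
  have hD : A * (diagonal xt ^ 2 - diagonal x ^ 2) * Aᵀ = T - S := by
    rw [Matrix.mul_sub, Matrix.sub_mul]
  have hconst : xmin ^ 4 * lamMin (A * Aᵀ) ^ 2 / (xmax ^ 8 * lamMax (A * Aᵀ) ^ 4) * frobSq (T - S)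
      ≤ b⁻¹ ^ 2 * frobSq (T - S) := by
    rcases isEmpty_or_nonempty (Fin n) with hn | ⟨⟨i⟩⟩
    -- without coordinates `xmin ≤ xmax` may fail, but then `T - S = 0`
    · rw [← hD, Subsingleton.elim (diagonal xt ^ 2 - diagonal x ^ 2) 0]
      simp [frobSq]
    · exact mul_le_mul_of_nonneg_right (div_le_inv_sq_of_le hxmin.le ((hxt i).1.trans (hxt i).2)
        hlamMin (lamMin_le_lamMax _)) (frobSq_nonneg _)
  rw [ge_iff_le, nonsing_inv_nonsing_inv _ hX,
    trace_mul_inv_sub_inv_mul_mul_inv_sub_inv hX hXt, hD]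
  exact hconst.trans (sq_mul_frobSq_le_trace (inv_nonneg.mpr hb) (inv_smul_one_le_inv hT hTb)
    (hT.isHermitian.sub (posSemidef_mul_diagonal_sq_mul_transpose A x).isHermitian))

/-- Lower bound for Tr(Σ⁻¹ ΔΣ Σ⁻¹ ΔΣ). -/
theorem stmt3 {m n : ℕ} (A : Matrix (Fin m) (Fin n) ℝ)
    (x xt : Fin n → ℝ) (xmin xmax : ℝ) (hxmin : 0 < xmin)
    (hx : ∀ i, x i ∈ Set.Icc xmin xmax) (hxt : ∀ i, xt i ∈ Set.Icc xmin xmax)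
    (hX : IsUnit (A * (Matrix.diagonal x) ^ 2 * Aᵀ).det)
    (hXt : IsUnit (A * (Matrix.diagonal xt) ^ 2 * Aᵀ).det) :
    Matrix.trace
      (((A * (Matrix.diagonal x) ^ 2 * Aᵀ)⁻¹)⁻¹ *
        ((A * (Matrix.diagonal xt) ^ 2 * Aᵀ)⁻¹ - (A * (Matrix.diagonal x) ^ 2 * Aᵀ)⁻¹) *
        ((A * (Matrix.diagonal x) ^ 2 * Aᵀ)⁻¹)⁻¹ *
        ((A * (Matrix.diagonal xt) ^ 2 * Aᵀ)⁻¹ - (A * (Matrix.diagonal x) ^ 2 * Aᵀ)⁻¹)) ≥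
      (xmin ^ 4 * lamMin (A * Aᵀ) ^ 2 / (xmax ^ 8 * lamMax (A * Aᵀ) ^ 4)) *
        frobSq (A * ((Matrix.diagonal xt) ^ 2 - (Matrix.diagonal x) ^ 2) * Aᵀ) :=
  stmt3_general A x xt xmin xmax hxmin hxt hX hXt
end

section
/- Let Σ̃ = (AX̃²Aᵀ)⁻¹ and Σ̂ = (AX̂²Aᵀ)⁻¹ with X̃ = diag(x̃), X̂ = diag(x̂), all entries of x̃ and x̂ in [x_min, x_max] with x_min > 0, and AAᵀ positive definite. Then every eigenvalue λ of Σ̃^{−1/2} (Σ̃ − Σ̂) Σ̃^{−1/2} satisfies |λ| ≤ x_max² λ_max²(AAᵀ) ‖x̂² − x̃²‖_∞ / (x_min⁴ λ_min²(AAᵀ)), where x̂² and x̃² denote entrywise squares. -/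
open Matrix MeasureTheory ProbabilityTheory Real

open scoped ComplexOrder in
noncomputable def Matrix.PosSemidef.sqrt {n 𝕜 : Type*} [Fintype n] [RCLike 𝕜] [DecidableEq n]
    {A : Matrix n n 𝕜} (hA : A.PosSemidef) : Matrix n n 𝕜 :=
  (hA.1.eigenvectorUnitary : Matrix n n 𝕜) * diagonal ((↑) ∘ (√·) ∘ hA.1.eigenvalues) *
    (star hA.1.eigenvectorUnitary : Matrix n n 𝕜)

/-!
Let `T = A X̃² Aᵀ` and `S = T^{-1/2}`, so `S² = Σ̃`. An eigenvector `z` of `S⁻¹ (Σ̃ - Σ̂) S⁻¹`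
gives `w = S⁻¹ z ≠ 0` with `μ · wᵀΣ̃w = wᵀΣ̃w - wᵀΣ̂w`, so it suffices to compare the two
quadratic forms. With `u = Aᵀ Σ̃ w` and `v = Aᵀ Σ̂ w` both forms and their cross term are
weighted sums: `wᵀΣ̃w = ∑ x̃² u² = ∑ x̂² u v` and `wᵀΣ̂w = ∑ x̂² v² = ∑ x̃² u v`. Hence the
difference is `∑ (x̂² - x̃²) u v`, at most `‖x̂² - x̃²‖_∞ ∑ |u| |v|`, and Cauchy–Schwarz combined
with `x_min² ‖u‖² ≤ wᵀΣ̃w` and `x_min² ‖v‖² ≤ wᵀΣ̂w ≤ x_max² ∑ |u| |v|` gives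
`∑ |u| |v| ≤ (x_max² / x_min⁴) wᵀΣ̃w`. So `|μ| ≤ x_max² ‖x̂² - x̃²‖_∞ / x_min⁴`, and the factor
`λ_max²(AAᵀ) / λ_min²(AAᵀ)` of the claim is at least `1`.
-/

namespace Matrix.PosSemidef

open scoped ComplexOrder

variable {n 𝕜 : Type*} [Fintype n] [RCLike 𝕜] [DecidableEq n] {A : Matrix n n 𝕜}

theorem sqrt_mul_self (hA : A.PosSemidef) : hA.sqrt * hA.sqrt = A := by
  set u := hA.1.eigenvectorUnitary
  set D : Matrix n n 𝕜 := diagonal ((↑) ∘ (√·) ∘ hA.1.eigenvalues)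
  have hU : ((star u : unitary (Matrix n n 𝕜)) : Matrix n n 𝕜) * u = 1 := by simp
  have hD : D * D = diagonal (RCLike.ofReal ∘ hA.1.eigenvalues) := by
    simp only [D, diagonal_mul_diagonal, Function.comp_apply, ← RCLike.ofReal_mul,
      Real.mul_self_sqrt (hA.eigenvalues_nonneg _)]
    rfl
  calc (u : Matrix n n 𝕜) * D * ↑(star u) * (↑u * D * ↑(star u))
      = ↑u * (D * (↑(star u) * ↑u) * D) * ↑(star u) := by
        simp only [Matrix.mul_assoc]
    _ = A := by
        rw [hU, Matrix.mul_one, hD]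
        exact hA.1.spectral_theorem.symm

theorem isHermitian_sqrt (hA : A.PosSemidef) : hA.sqrt.IsHermitian := by
  refine (mul_mul_conjTranspose_same (PosSemidef.diagonal fun i => ?_) _).1
  simp [Real.sqrt_nonneg]

theorem isUnit_det_sqrt (hA : A.PosSemidef) (hdet : IsUnit A.det) :
    IsUnit hA.sqrt.det :=
  isUnit_of_mul_isUnit_left (by rwa [← det_mul, hA.sqrt_mul_self])

end Matrix.PosSemidef

theorem Module.End.HasEigenvalue.exists_mulVec_eq_smul {ι 𝕜 : Type*} [Fintype ι]
    [DecidableEq ι] [RCLike 𝕜] {M : Matrix ι ι 𝕜} {μ : 𝕜}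
    (hμ : Module.End.HasEigenvalue (toEuclideanLin M) μ) :
    ∃ v ≠ 0, M *ᵥ v = μ • v := by
  obtain ⟨v, hv⟩ := hμ.exists_hasEigenvector
  refine ⟨v.ofLp, (WithLp.ofLp_injective 2).ne_iff.2 hv.2, ?_⟩
  simpa using congrArg WithLp.ofLp hv.apply_eq_smul

theorem mul_sum_abs_mul_abs_le {κ : Type*} [Fintype κ] {u v : κ → ℝ} {lo hi : ℝ} (hlo : 0 ≤ lo)
    (hhi : 0 ≤ hi) (h : lo * ∑ k, v k ^ 2 ≤ hi * ∑ k, |u k| * |v k|) :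
    lo * ∑ k, |u k| * |v k| ≤ hi * ∑ k, u k ^ 2 := by
  set s := ∑ k, |u k| * |v k|
  have hcs : s ^ 2 ≤ (∑ k, u k ^ 2) * ∑ k, v k ^ 2 := by
    simpa only [sq_abs] using Finset.sum_mul_sq_le_sq_mul_sq Finset.univ (|u ·|) (|v ·|)
  rcases (show 0 ≤ s by positivity).eq_or_lt with hs | hs
  · rw [← hs, mul_zero]
    positivity
  · -- `lo s² ≤ lo (∑ u²) (∑ v²) ≤ hi s ∑ u²`, then cancel `s`
    nlinarith [mul_le_mul_of_nonneg_left h (by positivity : 0 ≤ ∑ k, u k ^ 2)]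

theorem abs_sum_mul_sub_sum_mul_le {κ : Type*} [Fintype κ] {dt dh u v : κ → ℝ} {lo hi δ : ℝ}
    (hlo : 0 < lo) (hdt : ∀ k, dt k ∈ Set.Icc lo hi) (hdh : ∀ k, lo ≤ dh k)
    (hδ : ∀ k, |dh k - dt k| ≤ δ)
    (hu : ∑ k, dt k * (u k * u k) = ∑ k, dh k * (u k * v k))
    (hv : ∑ k, dh k * (v k * v k) = ∑ k, dt k * (u k * v k)) :
    |∑ k, dt k * (u k * u k) - ∑ k, dh k * (v k * v k)| ≤
      δ * hi / lo ^ 2 * ∑ k, dt k * (u k * u k) := by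
  rcases isEmpty_or_nonempty κ with hκ | ⟨⟨k₀⟩⟩
  · simp
  have hδ0 : 0 ≤ δ := (abs_nonneg _).trans (hδ k₀)
  have hhi : 0 ≤ hi := hlo.le.trans ((hdt k₀).1.trans (hdt k₀).2)
  set s := ∑ k, |u k| * |v k|
  have hdiff : |∑ k, dt k * (u k * u k) - ∑ k, dh k * (v k * v k)| ≤ δ * s := by
    rw [hu, hv, ← Finset.sum_sub_distrib, Finset.mul_sum]
    refine (Finset.abs_sum_le_sum_abs _ _).trans (Finset.sum_le_sum fun k _ => ?_)
    rw [← sub_mul, abs_mul, abs_mul]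
    exact mul_le_mul_of_nonneg_right (hδ k) (by positivity)
  have hu_lower : lo * ∑ k, u k ^ 2 ≤ ∑ k, dt k * (u k * u k) := by
    rw [Finset.mul_sum]
    exact Finset.sum_le_sum fun k _ => by nlinarith [(hdt k).1, mul_self_nonneg (u k)]
  have hv_lower : lo * ∑ k, v k ^ 2 ≤ ∑ k, dh k * (v k * v k) := by
    rw [Finset.mul_sum]
    exact Finset.sum_le_sum fun k _ => by nlinarith [hdh k, mul_self_nonneg (v k)]
  have hv_upper : ∑ k, dh k * (v k * v k) ≤ hi * s := by
    rw [hv, Finset.mul_sum]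
    refine Finset.sum_le_sum fun k _ => ?_
    calc dt k * (u k * v k) ≤ dt k * (|u k| * |v k|) := by
          rw [← abs_mul]
          exact mul_le_mul_of_nonneg_left (le_abs_self _) (hlo.le.trans (hdt k).1)
      _ ≤ hi * (|u k| * |v k|) := mul_le_mul_of_nonneg_right (hdt k).2 (by positivity)
  have hs := mul_sum_abs_mul_abs_le hlo.le hhi (hv_lower.trans hv_upper)
  refine hdiff.trans ?_
  rw [div_mul_eq_mul_div, le_div_iff₀ (by positivity)]
  nlinarith [mul_le_mul_of_nonneg_left hs (mul_nonneg hδ0 hlo.le),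
    mul_le_mul_of_nonneg_left hu_lower (mul_nonneg hδ0 hhi)]

namespace Matrix

section Congruence

variable {ι : Type*} [Fintype ι] [DecidableEq ι] {S N : Matrix ι ι ℝ}

theorem exists_mul_dotProduct_mulVec_eq_of_hasEigenvalue_inv_mul_mul_inv (hS : S.IsHermitian)
    (hSdet : IsUnit S.det) {μ : ℝ}
    (hμ : Module.End.HasEigenvalue (toEuclideanLin (S⁻¹ * N * S⁻¹)) μ) :
    ∃ w ≠ 0, μ * (w ⬝ᵥ (S * S) *ᵥ w) = w ⬝ᵥ N *ᵥ w := by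
  obtain ⟨v, hv, hMv⟩ := hμ.exists_mulVec_eq_smul
  have hSt : Sᵀ = S := by rw [← conjTranspose_eq_transpose_of_trivial, hS.eq]
  have hSw : S *ᵥ (S⁻¹ *ᵥ v) = v := by
    rw [mulVec_mulVec, mul_nonsing_inv _ hSdet, one_mulVec]
  refine ⟨S⁻¹ *ᵥ v, fun h => hv (by rw [← hSw, h, mulVec_zero]), ?_⟩
  have hSinv : (S⁻¹)ᵀ = S⁻¹ := by rw [transpose_nonsing_inv, hSt]
  calc μ * (S⁻¹ *ᵥ v ⬝ᵥ (S * S) *ᵥ (S⁻¹ *ᵥ v)) = v ⬝ᵥ (μ • v) := by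
        rw [← mulVec_mulVec, dotProduct_mulVec, ← mulVec_transpose, hSt, hSw, dotProduct_smul,
          smul_eq_mul]
    _ = S⁻¹ *ᵥ v ⬝ᵥ N *ᵥ (S⁻¹ *ᵥ v) := by
        rw [← hMv, ← mulVec_mulVec, ← mulVec_mulVec, dotProduct_mulVec, ← mulVec_transpose,
          hSinv]

end Congruence

section Comparison

variable {ι κ : Type*} [Fintype ι] [Fintype κ] [DecidableEq κ]

theorem mul_diagonal_mul_transpose_mulVec_dotProduct (A : Matrix ι κ ℝ) (d : κ → ℝ)
    (x y : ι → ℝ) :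
    (A * diagonal d * Aᵀ) *ᵥ x ⬝ᵥ y = ∑ k, d k * ((Aᵀ *ᵥ x) k * (Aᵀ *ᵥ y) k) := by
  rw [← mulVec_mulVec, ← mulVec_mulVec, dotProduct_comm, dotProduct_mulVec,
    ← mulVec_transpose]
  simp only [dotProduct, mulVec_diagonal]
  exact Finset.sum_congr rfl fun k _ => by ring

variable [DecidableEq ι] in
theorem abs_dotProduct_inv_mulVec_sub_le {A : Matrix ι κ ℝ} {dt dh : κ → ℝ} {lo hi δ : ℝ}
    (hlo : 0 < lo) (hdt : ∀ k, dt k ∈ Set.Icc lo hi) (hdh : ∀ k, lo ≤ dh k)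
    (hδ : ∀ k, |dh k - dt k| ≤ δ) (hT : IsUnit (A * diagonal dt * Aᵀ).det)
    (hH : IsUnit (A * diagonal dh * Aᵀ).det) (w : ι → ℝ) :
    |w ⬝ᵥ (A * diagonal dt * Aᵀ)⁻¹ *ᵥ w - w ⬝ᵥ (A * diagonal dh * Aᵀ)⁻¹ *ᵥ w| ≤
      δ * hi / lo ^ 2 * (w ⬝ᵥ (A * diagonal dt * Aᵀ)⁻¹ *ᵥ w) := by
  set a := (A * diagonal dt * Aᵀ)⁻¹ *ᵥ w
  set b := (A * diagonal dh * Aᵀ)⁻¹ *ᵥ w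
  have ha : (A * diagonal dt * Aᵀ) *ᵥ a = w := by
    rw [mulVec_mulVec, mul_nonsing_inv _ hT, one_mulVec]
  have hb : (A * diagonal dh * Aᵀ) *ᵥ b = w := by
    rw [mulVec_mulVec, mul_nonsing_inv _ hH, one_mulVec]
  have hqT : w ⬝ᵥ a = ∑ k, dt k * ((Aᵀ *ᵥ a) k * (Aᵀ *ᵥ a) k) := by
    rw [← mul_diagonal_mul_transpose_mulVec_dotProduct, ha]
  have hqH : w ⬝ᵥ b = ∑ k, dh k * ((Aᵀ *ᵥ b) k * (Aᵀ *ᵥ b) k) := by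
    rw [← mul_diagonal_mul_transpose_mulVec_dotProduct, hb]
  rw [hqT, hqH]
  refine abs_sum_mul_sub_sum_mul_le hlo hdt hdh hδ ?_ ?_
  · rw [← hqT, ← hb, mul_diagonal_mul_transpose_mulVec_dotProduct]
    exact Finset.sum_congr rfl fun k _ => by ring
  · rw [← hqH, ← ha, mul_diagonal_mul_transpose_mulVec_dotProduct]

end Comparison

section Extremal

variable {n : ℕ} {M : Matrix (Fin n) (Fin n) ℝ}

theorem IsHermitian.setOf_hasEigenvalue_toEuclideanLin_eq_range (hM : M.IsHermitian) :
    {μ : ℝ | Module.End.HasEigenvalue (toEuclideanLin M) μ} = Set.range hM.eigenvalues := by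
  ext μ
  rw [Set.mem_ofPred_eq, Module.End.hasEigenvalue_iff_mem_spectrum, spectrum_toLpLin,
    hM.spectrum_real_eq_range_eigenvalues]

theorem PosDef.lamMin_pos [NeZero n] (hM : M.PosDef) : 0 < lamMin M := by
  rw [lamMin, hM.isHermitian.setOf_hasEigenvalue_toEuclideanLin_eq_range]
  obtain ⟨i, hi⟩ := (Set.range_nonempty _).csInf_mem (Set.finite_range hM.1.eigenvalues)
  exact hi ▸ hM.eigenvalues_pos i

theorem IsHermitian.lamMin_le_lamMax [NeZero n] (hM : M.IsHermitian) : lamMin M ≤ lamMax M := by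
  rw [lamMin, lamMax, hM.setOf_hasEigenvalue_toEuclideanLin_eq_range]
  exact csInf_le_csSup (Set.range_nonempty _) (Set.finite_range _).bddBelow
    (Set.finite_range _).bddAbove

end Extremal

end Matrix

/-- Eigenvalue bound for Σ̃^{−1/2}(Σ̃−Σ̂)Σ̃^{−1/2}. -/
theorem stmt9 {m n : ℕ} (A : Matrix (Fin m) (Fin n) ℝ)
    (xt xh : Fin n → ℝ) (xmin xmax : ℝ) (hxmin : 0 < xmin)
    (hxt : ∀ i, xt i ∈ Set.Icc xmin xmax) (hxh : ∀ i, xh i ∈ Set.Icc xmin xmax)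
    (hAA : (A * Aᵀ).PosDef)
    (hT : (A * (Matrix.diagonal xt) ^ 2 * Aᵀ).PosDef)
    (hH : (A * (Matrix.diagonal xh) ^ 2 * Aᵀ).PosDef)
    (μ : ℝ)
    (hμ : Module.End.HasEigenvalue
      (Matrix.toEuclideanLin
        ((hT.inv.posSemidef.sqrt)⁻¹ *
          ((A * (Matrix.diagonal xt) ^ 2 * Aᵀ)⁻¹ - (A * (Matrix.diagonal xh) ^ 2 * Aᵀ)⁻¹) *
          (hT.inv.posSemidef.sqrt)⁻¹)) μ) :
    |μ| ≤ xmax ^ 2 * lamMax (A * Aᵀ) ^ 2 * (⨆ i, |xh i ^ 2 - xt i ^ 2|) /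
      (xmin ^ 4 * lamMin (A * Aᵀ) ^ 2) := by
  have hTinv := hT.inv.posSemidef
  obtain ⟨w, hw, hμw⟩ := exists_mul_dotProduct_mulVec_eq_of_hasEigenvalue_inv_mul_mul_inv
    hTinv.isHermitian_sqrt (hTinv.isUnit_det_sqrt hT.inv.det_pos.ne'.isUnit) hμ
  rw [hTinv.sqrt_mul_self, sub_mulVec, dotProduct_sub] at hμw
  have hq : 0 < w ⬝ᵥ (A * diagonal xt ^ 2 * Aᵀ)⁻¹ *ᵥ w := by
    simpa using hT.inv.dotProduct_mulVec_pos hw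
  have hsq : ∀ x ∈ Set.Icc xmin xmax, x ^ 2 ∈ Set.Icc (xmin ^ 2) (xmax ^ 2) := fun x hx =>
    ⟨pow_le_pow_left₀ hxmin.le hx.1 2, pow_le_pow_left₀ (hxmin.le.trans hx.1) hx.2 2⟩
  have hTdet : IsUnit (A * diagonal (xt ^ 2) * Aᵀ).det := by
    rw [← diagonal_pow]; exact hT.det_pos.ne'.isUnit
  have hHdet : IsUnit (A * diagonal (xh ^ 2) * Aᵀ).det := by
    rw [← diagonal_pow]; exact hH.det_pos.ne'.isUnit
  have hcmp := abs_dotProduct_inv_mulVec_sub_le (dt := xt ^ 2) (dh := xh ^ 2) (pow_pos hxmin 2)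
    (fun k => hsq _ (hxt k)) (fun k => (hsq _ (hxh k)).1)
    (fun k => le_ciSup (Set.finite_range fun k => |xh k ^ 2 - xt k ^ 2|).bddAbove k)
    hTdet hHdet w
  rw [← diagonal_pow, ← diagonal_pow, ← hμw, abs_mul, abs_of_pos hq] at hcmp
  have : NeZero m := ⟨by rintro rfl; exact hw (Subsingleton.elim _ _)⟩
  have hδ0 : 0 ≤ ⨆ i, |xh i ^ 2 - xt i ^ 2| := Real.iSup_nonneg fun i => abs_nonneg _
  have hratio : 1 ≤ lamMax (A * Aᵀ) ^ 2 / lamMin (A * Aᵀ) ^ 2 := by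
    rw [one_le_div (pow_pos hAA.lamMin_pos 2)]
    exact pow_le_pow_left₀ hAA.lamMin_pos.le hAA.isHermitian.lamMin_le_lamMax 2
  calc |μ| ≤ (⨆ i, |xh i ^ 2 - xt i ^ 2|) * xmax ^ 2 / (xmin ^ 2) ^ 2 :=
        le_of_mul_le_mul_right hcmp hq
    _ ≤ (⨆ i, |xh i ^ 2 - xt i ^ 2|) * xmax ^ 2 / (xmin ^ 2) ^ 2 *
        (lamMax (A * Aᵀ) ^ 2 / lamMin (A * Aᵀ) ^ 2) :=
        le_mul_of_one_le_right (by positivity) hratio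
    _ = _ := by ring
end
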